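/- Let Γ be a countable amenable group acting continuously on a compact metrizable space X with the weak specification property, and suppose X has more than one point. Then the topological entropy of the action is strictly positive. -/

import Mathlib

open Filter Topology MeasureTheory
open scoped symmDiff

namespace GOE

/-- The action of `Γ` on `X` is continuous (each group element acts continuously). -/
def ContAction (Γ X : Type*) [Group Γ] [TopologicalSpace X] [MulAction Γ X] : Prop :=
  ∀ s : Γ, Continuous fun x : X => s • x

/-- The weak specification property with respect to the metric on `X`. -/
def WeakSpec (Γ X : Type*) [Group Γ] [MetricSpace X] [MulAction Γ X] : Prop :=
  ∀ ε : ℝ, 0 < ε → ∃ F : Finset Γ, F.Nonempty ∧ (∀ s ∈ F, s⁻¹ ∈ F) ∧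
    ∀ (J : Type) (_ : Fintype J) (Fj : J → Finset Γ),
      (∀ i j : J, i ≠ j → ∀ f ∈ F, ∀ s ∈ Fj i, f * s ∉ Fj j) →
      ∀ xj : J → X, ∃ x : X, ∀ j : J, ∀ s ∈ Fj j, dist (s • x) (s • xj j) ≤ ε

/-- Expansiveness of the action with respect to the metric on `X`. -/
def Expansive (Γ X : Type*) [Group Γ] [MetricSpace X] [MulAction Γ X] : Prop :=
  ∃ κ : ℝ, 0 < κ ∧ ∀ x y : X, x ≠ y → ∃ s : Γ, κ < dist (s • x) (s • y)

/-- `(x, y)` is a homoclinic pair: `dist (s • x) (s • y) → 0` as `s → ∞` in `Γ`. -/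
def Homoclinic (Γ : Type*) {X : Type*} [Group Γ] [MetricSpace X] [MulAction Γ X]
    (x y : X) : Prop :=
  ∀ ε : ℝ, 0 < ε → ∃ E : Finset Γ, ∀ s : Γ, s ∉ E → dist (s • x) (s • y) < ε

/-- `T` is pre-injective: injective on each homoclinic equivalence class. -/
def PreInjective (Γ : Type*) {X Y : Type*} [Group Γ] [MetricSpace X] [MulAction Γ X]
    (T : X → Y) : Prop :=
  ∀ x y : X, Homoclinic Γ x y → T x = T y → x = y

/-- `F` is a left Følner sequence for `Γ`. -/
def IsFolner (Γ : Type*) [Group Γ] (F : ℕ → Finset Γ) : Prop :=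
  letI := Classical.decEq Γ
  (∀ n, (F n).Nonempty) ∧
  ∀ K : Finset Γ, K.Nonempty →
    Tendsto (fun n =>
        ((((K.biUnion fun k => (F n).image fun t => k * t) ∆ (F n)).card : ℝ) / (F n).card))
      atTop (𝓝 0)

/-- The minimal number of members of the cover `⋁_{s ∈ E} s⁻¹ U` needed to cover `Z`. -/
noncomputable def covNumOn (Γ X : Type*) [Group Γ] [TopologicalSpace X] [MulAction Γ X]
    (Z : Set X) (U : Finset (Set X)) (E : Finset Γ) : ℕ :=
  sInf {n : ℕ | ∃ c : Finset (Γ → Set X), c.card = n ∧ (∀ f ∈ c, ∀ s : Γ, f s ∈ U) ∧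
    Z ⊆ ⋃ f ∈ c, ⋂ s ∈ E, (fun x : X => s • x) ⁻¹' f s}

/-- Topological entropy of the restriction of the action to the invariant set `Z`,
computed along the Følner sequence `F` via open covers. -/
noncomputable def topEntOn (Γ X : Type*) [Group Γ] [TopologicalSpace X] [MulAction Γ X]
    (Z : Set X) (F : ℕ → Finset Γ) : EReal :=
  ⨆ (U : Finset (Set X)) (_ : (∀ V ∈ U, IsOpen V) ∧ Z ⊆ ⋃₀ (↑U : Set (Set X))),
    Filter.limsup
      (fun n => ((Real.log (covNumOn Γ X Z U (F n)) / (F n).card : ℝ) : EReal)) Filter.atTop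

/-- Maximal cardinality of a `(ρ_E, ε)`-separated subset of `Z`. -/
noncomputable def sepNum (Γ X : Type*) [Group Γ] [MetricSpace X] [MulAction Γ X]
    (Z : Set X) (E : Finset Γ) (ε : ℝ) : ℕ :=
  sSup {n : ℕ | ∃ W : Finset X, (↑W : Set X) ⊆ Z ∧ W.card = n ∧
    ∀ x ∈ W, ∀ y ∈ W, x ≠ y → ∃ s ∈ E, ε ≤ dist (s • x) (s • y)}

/-- Minimal cardinality of a `(ρ_E, ε)`-spanning subset of `Z`. -/
noncomputable def spnNum (Γ X : Type*) [Group Γ] [MetricSpace X] [MulAction Γ X]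
    (Z : Set X) (E : Finset Γ) (ε : ℝ) : ℕ :=
  sInf {n : ℕ | ∃ W : Finset X, (↑W : Set X) ⊆ Z ∧ W.card = n ∧
    ∀ x ∈ Z, ∃ w ∈ W, ∀ s ∈ E, dist (s • x) (s • w) < ε}

/-- Shannon entropy of a finite family of Borel sets. -/
noncomputable def shannonH {X : Type*} [MeasurableSpace X] (μ : Measure X)
    (P : Finset (Set X)) : ℝ :=
  ∑ A ∈ P, -((μ A).toReal * Real.log (μ A).toReal)

/-- The join `⋁_{s ∈ E} s⁻¹ P` of the partition `P`. -/
noncomputable def joinPart (Γ X : Type*) [Group Γ] [MulAction Γ X]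
    (P : Finset (Set X)) (E : Finset Γ) : Finset (Set X) :=
  letI := Classical.decEq Γ
  letI := Classical.decEq (Set X)
  (E.pi fun _ => P).image fun f => ⋂ s, ⋂ (h : s ∈ E), (fun x : X => s • x) ⁻¹' f s h

/-- Dynamical entropy of the partition `P` along the Følner sequence `F`. -/
noncomputable def dynEnt (Γ X : Type*) [Group Γ] [MulAction Γ X] [MeasurableSpace X]
    (μ : Measure X) (P : Finset (Set X)) (F : ℕ → Finset Γ) : ℝ :=
  Filter.limsup (fun n => shannonH μ (joinPart Γ X P (F n)) / (F n).card) Filter.atTop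

/-- `P` is a finite Borel partition of `X`. -/
def IsBorelPartition {X : Type*} [MeasurableSpace X] (P : Finset (Set X)) : Prop :=
  (∀ A ∈ P, MeasurableSet A) ∧ (∀ A ∈ P, ∀ B ∈ P, A ≠ B → Disjoint A B) ∧
    ⋃₀ (↑P : Set (Set X)) = Set.univ

/-- Completely positive entropy of `Γ ↷ (X, μ)` along the Følner sequence `F`. -/
def HasCPE (Γ X : Type*) [Group Γ] [MulAction Γ X] [MeasurableSpace X]
    (μ : Measure X) (F : ℕ → Finset Γ) : Prop :=
  ∀ P : Finset (Set X), IsBorelPartition P → 0 < shannonH μ P → 0 < dynEnt Γ X μ P F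

/-- `K'` is an independence set for the tuple `D` of subsets of `X`. -/
def IsIndepSet (Γ X : Type*) [Group Γ] [MulAction Γ X] {k : ℕ}
    (D : Fin k → Set X) (K' : Finset Γ) : Prop :=
  ∀ ω : Γ → Fin k, ∃ x : X, ∀ s ∈ K', s • x ∈ D (ω s)

/-- The independence density of the tuple `D`. -/
noncomputable def indepDensity (Γ X : Type*) [Group Γ] [MulAction Γ X] {k : ℕ}
    (D : Fin k → Set X) : ℝ :=
  sInf {r : ℝ | ∃ K : Finset Γ, K.Nonempty ∧
    r = ((sSup {n : ℕ | ∃ K' ⊆ K, K'.card = n ∧ IsIndepSet Γ X D K'} : ℕ) : ℝ) / K.card}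

/-- The shift action `(s • x)_t = x_{s⁻¹ t}` on `Γ → A`. -/
def shiftAct {Γ A : Type*} [Group Γ] (s : Γ) (x : Γ → A) : Γ → A := fun t => x (s⁻¹ * t)

end GOE

open GOE

/-!
Pick `x₀ ≠ x₁` and `ε = d(x₀, x₁) / 3`, so that the closed balls `B₀ = B(x₀, ε)` and
`B₁ = B(x₁, ε)` are disjoint and `U = {B₀ᶜ, B₁ᶜ}` is an open cover each of whose members misses
one of them. Weak specification at tolerance `ε` yields a finite `D ⊆ Γ` such that every
`D`-separated `K ⊆ Γ` is an independence set for `(B₀, B₁)`: any prescribed itinerary through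
the two balls along `K` is followed by a single orbit. Hence `⋁_{s ∈ F_n} s⁻¹U` needs at least
`2^|K|` members to cover `X` whenever `K ⊆ F_n`, and a maximal `D`-separated `K ⊆ F_n` has
`|F_n| ≤ (2|D| + 1)|K|`. So every term of the limsup defining the entropy is at least
`log 2 / (2|D| + 1)`.
-/

namespace GOE

open Finset
open scoped Pointwise

variable {Γ X : Type*} [Group Γ]

def IsSeparated (D K : Finset Γ) : Prop :=
  ∀ s ∈ K, ∀ t ∈ K, s ≠ t → t * s⁻¹ ∉ D

/-- A maximal `D`-separated subset `K` of `E` satisfies `E ⊆ K ∪ (D ∪ D⁻¹) K`. -/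
theorem exists_isSeparated_subset_card_le (D E : Finset Γ) :
    ∃ K ⊆ E, IsSeparated D K ∧ #E ≤ (2 * #D + 1) * #K := by
  classical
  obtain ⟨K, hK, hmax⟩ :=
    exists_max_image (E.powerset.filter (IsSeparated D)) card ⟨∅, by simp [IsSeparated]⟩
  rw [mem_filter, mem_powerset] at hK
  obtain ⟨hKE, hKsep⟩ := hK
  have hcover : E ⊆ K ∪ (D ∪ D⁻¹) * K := by
    intro e he
    by_cases heK : e ∈ K
    · exact mem_union_left _ heK
    have hnot : ¬ IsSeparated D (insert e K) := fun hsep => by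
      have := hmax _ (mem_filter.2 ⟨mem_powerset.2 (insert_subset he hKE), hsep⟩)
      rw [card_insert_of_notMem heK] at this
      omega
    simp only [IsSeparated, not_forall, not_not] at hnot
    obtain ⟨s, hs, t, ht, hst, hts⟩ := hnot
    rw [mem_insert] at hs ht
    refine mem_union_right _ (mem_mul.2 ?_)
    rcases hs with rfl | hs <;> rcases ht with rfl | ht
    · exact absurd rfl hst
    · exact ⟨(t * s⁻¹)⁻¹, mem_union_right _ (inv_mem_inv hts), t, ht, by group⟩
    · exact ⟨t * s⁻¹, mem_union_left _ hts, s, hs, by group⟩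
    · exact absurd hts (hKsep s hs t ht hst)
  refine ⟨K, hKE, hKsep, ?_⟩
  calc #E ≤ #(K ∪ (D ∪ D⁻¹) * K) := card_le_card hcover
    _ ≤ #K + #(D ∪ D⁻¹) * #K := (card_union_le _ _).trans (Nat.add_le_add_left card_mul_le _)
    _ ≤ #K + (#D + #D) * #K := by
      gcongr
      exact (card_union_le _ _).trans_eq (by rw [card_inv])
    _ = (2 * #D + 1) * #K := by ring

section Metric

variable [MetricSpace X] [MulAction Γ X]

theorem WeakSpec.exists_shadowing (hws : WeakSpec Γ X) {ε : ℝ} (hε : 0 < ε) :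
    ∃ D : Finset Γ, ∀ K, IsSeparated D K →
      ∀ y : Γ → X, ∃ x : X, ∀ k ∈ K, dist (k • x) (y k) ≤ ε := by
  obtain ⟨D, -, -, hspec⟩ := hws ε hε
  refine ⟨D, fun K hK y => ?_⟩
  -- the index type of weak specification must live in `Type`, hence `Fin #K` rather than `K`
  let a : Fin #K → Γ := fun i => K.equivFin.symm i
  have hsep : ∀ i j, i ≠ j → ∀ f ∈ D, ∀ s ∈ ({a i} : Finset Γ), f * s ∉ ({a j} : Finset Γ) := by
    rintro i j hij f hf s hs hfs
    rw [mem_singleton] at hs hfs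
    subst hs
    refine hK _ (K.equivFin.symm i).2 _ (K.equivFin.symm j).2
      (fun h => hij (K.equivFin.symm.injective (Subtype.ext h))) ?_
    show a j * (a i)⁻¹ ∈ D
    rwa [← hfs, mul_inv_cancel_right]
  obtain ⟨x, hx⟩ :=
    hspec (Fin #K) inferInstance (fun i => {a i}) hsep (fun i => (a i)⁻¹ • y (a i))
  refine ⟨x, fun k hk => ?_⟩
  simpa [a] using hx (K.equivFin ⟨k, hk⟩) _ (mem_singleton_self _)

theorem WeakSpec.exists_isIndepSet_closedBall (hws : WeakSpec Γ X) {ε : ℝ} (hε : 0 < ε) :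
    ∃ D : Finset Γ, ∀ K, IsSeparated D K →
      ∀ {n : ℕ} (p : Fin n → X), IsIndepSet Γ X (fun i => Metric.closedBall (p i) ε) K := by
  obtain ⟨D, hD⟩ := hws.exists_shadowing hε
  exact ⟨D, fun K hK n p ω => hD K hK (p ∘ ω)⟩

end Metric

section Cover

variable [TopologicalSpace X] [MulAction Γ X]

theorem exists_subcover_card_eq_covNumOn [Nonempty X] {U : Finset (Set X)}
    (hU : Set.univ ⊆ ⋃₀ (U : Set (Set X))) (E : Finset Γ) :
    ∃ c : Finset (Γ → Set X), #c = covNumOn Γ X Set.univ U E ∧ (∀ f ∈ c, ∀ s, f s ∈ U) ∧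
      Set.univ ⊆ ⋃ f ∈ c, ⋂ s ∈ E, (fun x : X => s • x) ⁻¹' f s := by
  classical
  obtain ⟨V, hV, -⟩ := hU (Set.mem_univ (Classical.arbitrary X))
  choose g hgU hg using fun x : X => hU (Set.mem_univ x)
  refine Nat.sInf_mem (s := {n | ∃ c : Finset (Γ → Set X), #c = n ∧ (∀ f ∈ c, ∀ s, f s ∈ U) ∧
    Set.univ ⊆ ⋃ f ∈ c, ⋂ s ∈ E, (fun x : X => s • x) ⁻¹' f s}) ?_
  refine ⟨_, (E.pi fun _ => U).image (fun f s => if h : s ∈ E then f s h else V), rfl, ?_, ?_⟩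
  · simp only [mem_image]
    rintro _ ⟨f, hf, rfl⟩ s
    dsimp only
    split_ifs with h
    exacts [mem_pi.1 hf s h, hV]
  · intro x _
    refine Set.mem_iUnion₂.2
      ⟨_, mem_image.2 ⟨fun s _ => g (s • x), mem_pi.2 fun s _ => hgU _, rfl⟩, ?_⟩
    refine Set.mem_iInter₂.2 fun s hs => ?_
    simpa [hs] using hg (s • x)

theorem pow_card_le_covNumOn {n : ℕ} [NeZero n] {U : Finset (Set X)}
    (hU : Set.univ ⊆ ⋃₀ (U : Set (Set X))) {D : Fin n → Set X}
    (hUD : ∀ V ∈ U, ∀ i j, ∀ y ∈ V, ∀ z ∈ V, y ∈ D i → z ∈ D j → i = j)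
    {K E : Finset Γ} (hK : IsIndepSet Γ X D K) (hKE : K ⊆ E) :
    n ^ #K ≤ covNumOn Γ X Set.univ U E := by
  classical
  have : Nonempty X := ⟨(hK 0).choose⟩
  obtain ⟨c, hc, hcU, hcov⟩ := exists_subcover_card_eq_covNumOn hU E
  choose x hx using hK
  choose Φ hΦc hΦ using fun ω => Set.mem_iUnion₂.1 (hcov (Set.mem_univ (x ω)))
  let extend : (K → Fin n) → Γ → Fin n := fun ψ g => if h : g ∈ K then ψ ⟨g, h⟩ else 0
  have hinj : Function.Injective fun ψ => (⟨Φ (extend ψ), hΦc _⟩ : c) := by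
    intro ψ ψ' h
    funext k
    have h1 := Set.mem_iInter₂.1 (hΦ (extend ψ)) k (hKE k.2)
    have h2 := Set.mem_iInter₂.1 (hΦ (extend ψ')) k (hKE k.2)
    have hΦeq : Φ (extend ψ) = Φ (extend ψ') := congrArg Subtype.val h
    rw [← hΦeq] at h2
    simpa [extend] using hUD _ (hcU _ (hΦc _) k) _ _ _ h1 _ h2 (hx _ k k.2) (hx _ k k.2)
  simpa [hc] using Fintype.card_le_of_injective _ hinj

theorem le_topEntOn {Z : Set X} {U : Finset (Set X)} (hUo : ∀ V ∈ U, IsOpen V)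
    (hUZ : Z ⊆ ⋃₀ (U : Set (Set X))) {F : ℕ → Finset Γ} {c : ℝ}
    (h : ∃ᶠ n in atTop, c ≤ Real.log (covNumOn Γ X Z U (F n)) / #(F n)) :
    (c : EReal) ≤ topEntOn Γ X Z F :=
  le_iSup₂_of_le U ⟨hUo, hUZ⟩ <|
    le_limsup_of_frequently_le' (h.mono fun _ hn => EReal.coe_le_coe hn)

end Cover

theorem log_div_le_log_div_of_pow_le {b k e m N : ℕ} (hb : 0 < b) (he : 0 < e)
    (hN : b ^ k ≤ N) (hek : e ≤ m * k) :
    Real.log b / m ≤ Real.log N / e := by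
  have hm : 0 < m := Nat.pos_of_ne_zero (by rintro rfl; omega)
  have hlog : k * Real.log b ≤ Real.log N := by
    rw [← Real.log_pow]
    exact Real.log_le_log (by positivity) (by exact_mod_cast hN)
  have hek' : (e : ℝ) ≤ m * k := by exact_mod_cast hek
  rw [div_le_div_iff₀ (by positivity) (by positivity)]
  calc Real.log b * e ≤ Real.log b * (m * k) :=
        mul_le_mul_of_nonneg_left hek' (Real.log_nonneg (by exact_mod_cast hb))
    _ ≤ Real.log N * m := by nlinarith

end GOE

theorem weakSpec_positive_entropy_general {Γ X : Type*} [Group Γ]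
    [MetricSpace X] [MulAction Γ X] [Nontrivial X]
    (F : ℕ → Finset Γ) (hF : IsFolner Γ F)
    (hws : WeakSpec Γ X) :
    0 < topEntOn Γ X Set.univ F := by
  classical
  obtain ⟨x₀, x₁, hne⟩ := exists_pair_ne X
  obtain ⟨ε, hε, hεd⟩ : ∃ ε : ℝ, 0 < ε ∧ ε + ε < dist x₀ x₁ :=
    ⟨dist x₀ x₁ / 3, by have := dist_pos.2 hne; constructor <;> linarith⟩
  obtain ⟨D, hD⟩ := hws.exists_isIndepSet_closedBall hε
  set B : Fin 2 → Set X := fun i => Metric.closedBall (![x₀, x₁] i) ε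
  have hB : Disjoint (B 0) (B 1) :=
    Metric.closedBall_disjoint_closedBall (x := x₀) (y := x₁) hεd
  set U : Finset (Set X) := {(B 0)ᶜ, (B 1)ᶜ}
  have hUopen : ∀ V ∈ U, IsOpen V := by
    simpa [U, B] using ⟨Metric.isClosed_closedBall, Metric.isClosed_closedBall⟩
  have hUcover : Set.univ ⊆ ⋃₀ (U : Set (Set X)) := by
    simpa [U, ← Set.compl_inter, Set.disjoint_iff_inter_eq_empty] using hB
  have hUB : ∀ V ∈ U, ∀ i j, ∀ y ∈ V, ∀ z ∈ V, y ∈ B i → z ∈ B j → i = j := by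
    simp only [U, Finset.mem_insert, Finset.mem_singleton]
    rintro V (rfl | rfl) i j y hy z hz hyi hzj <;> fin_cases i <;> fin_cases j <;> simp_all
  have hrate : ∀ n, Real.log 2 / (2 * D.card + 1 : ℕ) ≤
      Real.log (covNumOn Γ X Set.univ U (F n)) / (F n).card := fun n => by
    obtain ⟨K, hKF, hKsep, hcard⟩ := exists_isSeparated_subset_card_le D (F n)
    exact log_div_le_log_div_of_pow_le two_pos (hF.1 n).card_pos
      (pow_card_le_covNumOn hUcover hUB (hD K hKsep ![x₀, x₁]) hKF) hcard
  calc (0 : EReal) < (Real.log 2 / (2 * D.card + 1 : ℕ) : ℝ) := EReal.coe_pos.2 (by positivity)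
    _ ≤ topEntOn Γ X Set.univ F := le_topEntOn hUopen hUcover (.of_forall hrate)

/-- nontrivial actions of amenable groups with weak specification
have positive topological entropy. -/
theorem weakSpec_positive_entropy {Γ X : Type*} [Group Γ] [Countable Γ]
    [MetricSpace X] [CompactSpace X] [MulAction Γ X] [Nontrivial X]
    (hact : ContAction Γ X)
    (F : ℕ → Finset Γ) (hF : IsFolner Γ F)
    (hws : WeakSpec Γ X) :
    0 < topEntOn Γ X Set.univ F :=
  weakSpec_positive_entropy_general F hF hws
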